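/- arXiv:2306.12862 — 4 statements merged into one kernel-verified Lean document; each statement's English description precedes it below -/
import Mathlib

section
/- Let t ≥ 2 be an integer and let δ_t be the binary string 0^{t−1} · (1·0^{t−1}) · (1·0^{t−2}) · ⋯ · (1·0^1) · (1·0^0) · 1, i.e., 0^{t−1} followed by the blocks 1·0^{t−j} for j = 1, …, t (where 0^0 is the empty string), followed by a final 1 (for example, δ_3 = 001001011). Then δ_t has length exactly t(t+3)/2, and no prefix of δ_t satisfies the one-tailed stop condition with parameter t. Hence the bound t(t+3)/2 on the length of a binary string none of whose prefixes satisfies the one-tailed stop condition is tight for all t ≥ 2. -/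
/-- The fault count `f(w)`: the sum of `⌈ℓ/2⌉` over the lengths `ℓ` of the maximal
one-runs of `w`, computed equivalently by greedy left-to-right matching of `11` pairs
plus leftover isolated `1`s. -/
def faultCount : List Bool → ℕ
  | [] => 0
  | false :: w => faultCount w
  | [true] => 1
  | true :: false :: w => 1 + faultCount w
  | true :: true :: w => 1 + faultCount w

/-- `N11(w)`: the sum of `⌊ℓ/2⌋` over the lengths `ℓ` of the maximal one-runs of `w`,
i.e. the maximum number of disjoint pairs of adjacent `1`s. -/
def countN11 : List Bool → ℕ
  | true :: true :: w => 1 + countN11 w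
  | _ :: w => countN11 w
  | [] => 0

/-- The length `γ` of the maximal trailing zero-run of `p`. -/
def trailingZeros (p : List Bool) : ℕ := (p.reverse.takeWhile (fun b => !b)).length

/-- The portion `u` of `p` strictly before the last `1`, where `p = u ++ [1] ++ 0^γ`
(`u = []` if `p` contains no `1`). -/
def beforeLastOne (p : List Bool) : List Bool :=
  (p.reverse.drop (trailingZeros p + 1)).reverse

/-- The one-tailed stop condition with parameter `t`: either (C1) `p` ends in a `0`
and, writing `p = u·1·0^γ` with `0^γ` the maximal trailing zero-run (`u` empty and
`γ = |p|` if `p` has no `1`), one has `f(u) + γ ≥ t`; or (C2) `N11(p) ≥ t`. -/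
def stopOne (t : ℕ) (p : List Bool) : Prop :=
  (1 ≤ trailingZeros p ∧ t ≤ faultCount (beforeLastOne p) + trailingZeros p)
  ∨ t ≤ countN11 p

/-- The string `δ_t = 0^{t−1} · (1·0^{t−1}) · (1·0^{t−2}) · ⋯ · (1·0^1) · (1·0^0) · 1`,
e.g. `δ_3 = 001001011`. -/
def deltaT (t : ℕ) : List Bool :=
  List.replicate (t - 1) false ++
    ((List.range t).map (fun j => true :: List.replicate (t - 1 - j) false)).flatten ++ [true]

/-! ### Auxiliary simp lemmas for the two counting functions -/

@[simp] lemma countN11_nil : countN11 [] = 0 := rfl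
@[simp] lemma countN11_false (w : List Bool) : countN11 (false :: w) = countN11 w := rfl
@[simp] lemma countN11_tt (w : List Bool) : countN11 (true :: true :: w) = 1 + countN11 w := rfl
@[simp] lemma countN11_tf (w : List Bool) : countN11 (true :: false :: w) = countN11 w := rfl
@[simp] lemma countN11_t1 : countN11 [true] = 0 := rfl

@[simp] lemma fc_nil : faultCount [] = 0 := rfl
@[simp] lemma fc_false (w : List Bool) : faultCount (false :: w) = faultCount w := rfl
@[simp] lemma fc_tt (w : List Bool) : faultCount (true :: true :: w) = 1 + faultCount w := rfl
@[simp] lemma fc_tf (w : List Bool) : faultCount (true :: false :: w) = 1 + faultCount w := rfl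
@[simp] lemma fc_t1 : faultCount [true] = 1 := rfl

lemma cz (m : ℕ) (v : List Bool) : countN11 (List.replicate m false ++ v) = countN11 v := by
  induction m with
  | zero => rfl
  | succ k ih => simpa [List.replicate_succ] using ih

lemma fz (m : ℕ) (v : List Bool) : faultCount (List.replicate m false ++ v) = faultCount v := by
  induction m with
  | zero => rfl
  | succ k ih => simpa [List.replicate_succ] using ih

lemma c_rep (m : ℕ) : countN11 (List.replicate m false) = 0 := by
  simpa using cz m []

lemma fc_rep (m : ℕ) : faultCount (List.replicate m false) = 0 := by
  simpa using fz m []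

lemma c_t0 (k : ℕ) : countN11 (true :: List.replicate k false) = 0 := by
  cases k with
  | zero => rfl
  | succ m => simp [List.replicate_succ, c_rep]

lemma fc_t0 (k : ℕ) : faultCount (true :: List.replicate k false) = 1 := by
  cases k with
  | zero => rfl
  | succ m => simp [List.replicate_succ, fc_rep]

/-! ### trailingZeros / beforeLastOne computations -/

lemma tw (k : ℕ) (l : List Bool) :
    (List.replicate k false ++ true :: l).takeWhile (fun b => !b) = List.replicate k false := by
  induction k with
  | zero => simp [List.takeWhile]
  | succ m ih => simp [List.replicate_succ, List.takeWhile, ih]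

lemma rev_block (w : List Bool) (k : ℕ) :
    (w ++ true :: List.replicate k false).reverse
      = List.replicate k false ++ true :: w.reverse := by
  simp [List.reverse_append]

lemma tz_block (w : List Bool) (k : ℕ) :
    trailingZeros (w ++ true :: List.replicate k false) = k := by
  rw [trailingZeros, rev_block, tw]
  simp

lemma blo_block (w : List Bool) (k : ℕ) :
    beforeLastOne (w ++ true :: List.replicate k false) = w := by
  rw [beforeLastOne, tz_block, rev_block]
  rw [show List.replicate k false ++ true :: w.reverse
        = (List.replicate k false ++ [true]) ++ w.reverse by simp]
  rw [show k + 1 = (List.replicate k false ++ [true]).length by simp]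
  rw [List.drop_left, List.reverse_reverse]

lemma tw_rep (m : ℕ) :
    (List.replicate m false).takeWhile (fun b => !b) = List.replicate m false := by
  induction m with
  | zero => rfl
  | succ k ih => simp [List.replicate_succ, List.takeWhile, ih]

lemma tz_rep (m : ℕ) : trailingZeros (List.replicate m false) = m := by
  rw [trailingZeros, List.reverse_replicate, tw_rep]
  simp

lemma blo_rep (m : ℕ) : beforeLastOne (List.replicate m false) = [] := by
  rw [beforeLastOne, tz_rep]
  rw [List.drop_eq_nil_of_le (by simp)]
  rfl

/-! ### prefix helpers -/

lemma prefix_split {p a b : List Bool} (h : p <+: a ++ b) :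
    p <+: a ∨ ∃ q, p = a ++ q ∧ q <+: b := by
  rcases List.prefix_or_prefix_of_prefix h (List.prefix_append a b) with h1 | h1
  · exact .inl h1
  · obtain ⟨q, rfl⟩ := h1
    exact .inr ⟨q, rfl, (List.prefix_append_right_inj a).1 h⟩

lemma prefix_rep {p : List Bool} {m : ℕ} (h : p <+: List.replicate m false) :
    ∃ k, k ≤ m ∧ p = List.replicate k false := by
  have h2 := List.prefix_iff_eq_take.1 h
  rw [List.take_replicate] at h2
  exact ⟨min p.length m, min_le_right _ _, h2⟩

/-! ### non-stopping lemmas -/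

lemma notStop_rep (t k : ℕ) (hk : k < t) : ¬ stopOne t (List.replicate k false) := by
  intro h
  rcases h with ⟨h1, h2⟩ | h2
  · rw [tz_rep, blo_rep] at h2; simp at h2; omega
  · rw [c_rep] at h2; omega

lemma notStop_block (t : ℕ) (u : List Bool) (k : ℕ)
    (hZ : ∀ v, countN11 (u ++ v) = countN11 v)
    (hb : faultCount u + k < t) :
    ¬ stopOne t (u ++ true :: List.replicate k false) := by
  intro h
  rcases h with ⟨h1, h2⟩ | h2
  · rw [tz_block, blo_block] at h2; omega
  · rw [hZ, c_t0] at h2; omega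

lemma notStop_end (t : ℕ) (ht : 2 ≤ t) (u : List Bool)
    (hZ : ∀ v, countN11 (u ++ v) = countN11 v) :
    ¬ stopOne t (u ++ [true, true]) := by
  intro h
  rcases h with ⟨h1, _⟩ | h2
  · have : trailingZeros (u ++ [true, true]) = 0 := by
      have := tz_block (u ++ [true]) 0
      simpa using this
    omega
  · rw [hZ] at h2; simp at h2; omega

/-! ### the structure of `δ_t` -/

def tailStr : ℕ → List Bool
  | 0 => [true]
  | n + 1 => true :: (List.replicate n false ++ tailStr n)

lemma flatten_eq (n : ℕ) :
    ((List.range n).map (fun j => true :: List.replicate (n - 1 - j) false)).flatten ++ [true]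
      = tailStr n := by
  induction n with
  | zero => rfl
  | succ m ih =>
    rw [List.range_succ_eq_map]
    simp only [List.map_cons, List.map_map, List.flatten_cons]
    have hfun : ((fun j => true :: List.replicate (m + 1 - 1 - j) false) ∘ Nat.succ)
        = fun j => true :: List.replicate (m - 1 - j) false := by
      funext j
      simp only [Function.comp]
      congr 2
      omega
    rw [hfun]
    show (true :: List.replicate (m + 1 - 1 - 0) false) ++ _ ++ [true] = _
    have : m + 1 - 1 - 0 = m := by omega
    rw [this, tailStr, List.cons_append, List.cons_append, List.append_assoc, ih]

lemma deltaT_eq (t : ℕ) : deltaT t = List.replicate (t - 1) false ++ tailStr t := by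
  rw [deltaT, List.append_assoc, flatten_eq]

lemma tailStr_len (n : ℕ) : (tailStr n).length * 2 = n * (n + 1) + 2 := by
  induction n with
  | zero => rfl
  | succ m ih =>
    have h : (m + 1) * (m + 1 + 1) = m * (m + 1) + (m + 1) + (m + 1) := by ring
    simp only [tailStr, List.length_cons, List.length_append, List.length_replicate]
    generalize hA : m * (m + 1) = A at ih h
    generalize hB : (m + 1) * (m + 1 + 1) = B at h ⊢
    omega

/-! ### the main induction -/

lemma main_ind (t : ℕ) (ht : 2 ≤ t) :
    ∀ n u, (∀ v, countN11 (u ++ v) = countN11 v) →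
      (∀ v, faultCount (u ++ v) = faultCount u + faultCount v) →
      faultCount u + (n + 1) ≤ t → ¬ stopOne t u →
      ∀ q, q <+: tailStr (n + 1) → ¬ stopOne t (u ++ q) := by
  intro n
  induction n with
  | zero =>
    intro u hZ hP hb hu q hq
    rw [show tailStr 1 = [true, true] from rfl] at hq
    rcases List.prefix_cons_iff.1 hq with rfl | ⟨r, rfl, hr⟩
    · simpa using hu
    · rcases List.prefix_cons_iff.1 hr with rfl | ⟨r', rfl, hr'⟩
      · have := notStop_block t u 0 hZ (by omega)
        simpa using this
      · have : r' = [] := List.prefix_nil.1 hr'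
        subst this
        exact notStop_end t ht u hZ
  | succ m ih =>
    intro u hZ hP hb hu q hq
    rw [show tailStr (m + 2)
        = true :: (List.replicate (m + 1) false ++ tailStr (m + 1)) from rfl] at hq
    rcases List.prefix_cons_iff.1 hq with rfl | ⟨r, rfl, hr⟩
    · simpa using hu
    · rcases prefix_split hr with h1 | ⟨q', rfl, hq'⟩
      · obtain ⟨k, hk, rfl⟩ := prefix_rep h1
        exact notStop_block t u k hZ (by omega)
      · set u' := u ++ true :: List.replicate (m + 1) false with hu'
        have key : ∀ v, u' ++ v = u ++ true :: (List.replicate (m + 1) false ++ v) := by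
          intro v; simp [hu']
        have hZ' : ∀ v, countN11 (u' ++ v) = countN11 v := by
          intro v
          rw [key, hZ]
          simp [List.replicate_succ, cz]
        have hfc9 : ∀ v, faultCount (true :: (List.replicate (m + 1) false ++ v))
            = 1 + faultCount v := by
          intro v
          simp [List.replicate_succ, fz]
        have hfcu' : faultCount u' = faultCount u + 1 := by
          rw [hu', show u ++ true :: List.replicate (m + 1) false
              = u ++ (true :: (List.replicate (m + 1) false ++ [])) by simp, hP, hfc9]
          simp
        have hP' : ∀ v, faultCount (u' ++ v) = faultCount u' + faultCount v := by
          intro v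
          rw [key, hP, hfc9, hfcu']
          omega
        have hns : ¬ stopOne t u' := notStop_block t u (m + 1) hZ (by omega)
        have := ih u' hZ' hP' (by omega) hns q' hq'
        rw [key] at this
        exact this

/-- For `t ≥ 2`, the string `δ_t` has length exactly `t(t+3)/2`, and no prefix of
`δ_t` satisfies the one-tailed stop condition with parameter `t`: the bound
`t(t+3)/2` is tight. -/
theorem one_tailed_length_bound_tight (t : ℕ) (ht : 2 ≤ t) :
    (deltaT t).length = t * (t + 3) / 2 ∧
      ∀ p, p <+: deltaT t → ¬ stopOne t p := by
  obtain ⟨s, rfl⟩ : ∃ s, t = s + 2 := ⟨t - 2, by omega⟩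
  constructor
  · rw [deltaT_eq]
    have hL := tailStr_len (s + 2)
    have h2 : (s + 2) * (s + 2 + 3) = (s + 2) * (s + 2 + 1) + (s + 2) + (s + 2) := by ring
    simp only [List.length_append, List.length_replicate]
    generalize hA : (s + 2) * (s + 2 + 1) = A at hL h2
    generalize hB : (s + 2) * (s + 2 + 3) = B at h2 ⊢
    omega
  · intro p hp
    rw [deltaT_eq] at hp
    rcases prefix_split hp with h1 | ⟨q, rfl, hq⟩
    · obtain ⟨k, hk, rfl⟩ := prefix_rep h1
      exact notStop_rep _ k (by omega)
    · have hmain := main_ind (s + 2) (by omega) (s + 1) (List.replicate (s + 1) false)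
        (cz (s + 1))
        (fun v => by rw [fz, fc_rep]; omega)
        (by rw [fc_rep]; omega)
        (notStop_rep (s + 2) (s + 1) (by omega))
        q hq
      simpa using hmain
end

section
/- Let t ≥ 1 be an integer. There exists a binary string of length t² + 2t − 1 whose fault count equals t and which contains no zero-run of length t or more; namely, the string (0^{t−1}·1·1)^t · 0^{t−1}, consisting of t blocks 0^{t−1}11 followed by 0^{t−1}. Hence the length bound t² + 2t = (t+1)² − 1 in the Shor time decoder pigeonhole bound is tight. -/
/-- The string `(0^{t−1}·1·1)^t · 0^{t−1}`: `t` blocks `0^{t−1}11` followed by `0^{t−1}`. -/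
def shorTight (t : ℕ) : List Bool :=
  (List.replicate t (List.replicate (t - 1) false ++ [true, true])).flatten ++
    List.replicate (t - 1) false

lemma faultCount_rep (m : ℕ) (w : List Bool) :
    faultCount (List.replicate m false ++ w) = faultCount w := by
  induction m with
  | zero => rfl
  | succ n ih => simpa [List.replicate_succ, faultCount] using ih

lemma infix_split (l x y : List Bool) (hl : ∀ a ∈ l, a = false)
    (h : l <:+: x ++ true :: y) : l <:+: x ∨ l <:+: y := by
  obtain ⟨s, u, hsu⟩ := h
  rw [List.append_assoc] at hsu
  rw [← List.append_assoc] at hsu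
  rcases List.append_eq_append_iff.mp hsu with ⟨a, hx, hu⟩ | ⟨c, hsl, hy⟩
  · left
    exact ⟨s, a, hx.symm⟩
  · rcases List.append_eq_append_iff.mp hsl with ⟨e, hx, hl'⟩ | ⟨e, hs, hc⟩
    · -- x = s ++ e, l = e ++ c, true :: y = c ++ u
      cases c with
      | nil =>
        left
        exact ⟨s, [], by simp [hx, hl']⟩
      | cons b c' =>
        have hb : b = false := hl b (by simp [hl'])
        simp only [List.cons_append, List.cons.injEq] at hy
        simp [hb] at hy
    · -- s = x ++ e, c = e ++ l, true :: y = (e ++ l) ++ u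
      rw [hc, List.append_assoc] at hy
      cases e with
      | nil =>
        cases l with
        | nil => left; exact List.nil_infix
        | cons b l' =>
          have hb : b = false := hl b (by simp)
          simp at hy
          simp [hy.1] at hb
      | cons b e' =>
        right
        simp only [List.cons_append] at hy
        refine ⟨e', u, ?_⟩
        simp only [List.cons_append, List.cons.injEq] at hy
        rw [List.append_assoc]
        exact hy.2.symm

lemma not_infix_aux (t : ℕ) (ht : 1 ≤ t) (k : ℕ) :
    ¬ List.replicate t false <:+:
      (List.replicate k (List.replicate (t - 1) false ++ [true, true])).flatten
        ++ List.replicate (t - 1) false := by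
  have hl : ∀ a ∈ List.replicate t false, a = false := by
    intro a ha; exact (List.eq_of_mem_replicate ha)
  induction k with
  | zero =>
    intro h
    have := h.length_le
    simp at this
    omega
  | succ n ih =>
    intro h
    rw [List.replicate_succ, List.flatten_cons, List.append_assoc] at h
    have h' : List.replicate t false <:+:
        List.replicate (t - 1) false ++ true :: (true ::
          ((List.replicate n (List.replicate (t - 1) false ++ [true, true])).flatten
            ++ List.replicate (t - 1) false)) := by
      simpa using h
    rcases infix_split _ _ _ hl h' with h1 | h1
    · have := h1.length_le
      simp at this
      omega
    · have h'' : List.replicate t false <:+: ([] : List Bool) ++ true ::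
          ((List.replicate n (List.replicate (t - 1) false ++ [true, true])).flatten
            ++ List.replicate (t - 1) false) := by simpa using h1
      rcases infix_split _ _ _ hl h'' with h2 | h2
      · have := h2.length_le
        simp at this
        omega
      · exact ih h2

/-- For `t ≥ 1`, the string `(0^{t−1}·1·1)^t · 0^{t−1}` has length `t² + 2t − 1`,
fault count exactly `t`, and contains no zero-run of length `t` or more; hence the
length bound `t² + 2t = (t+1)² − 1` in the Shor time decoder pigeonhole bound is
tight. -/
theorem shor_time_decoder_bound_tight (t : ℕ) (ht : 1 ≤ t) :
    (shorTight t).length = t ^ 2 + 2 * t - 1 ∧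
      faultCount (shorTight t) = t ∧
      ¬ List.replicate t false <:+: shorTight t := by
  refine ⟨?_, ?_, not_infix_aux t ht t⟩
  · obtain ⟨m, rfl⟩ : ∃ m, t = m + 1 := ⟨t - 1, (Nat.succ_pred_eq_of_pos ht).symm⟩
    simp [shorTight]
    ring_nf
    generalize m ^ 2 = k
    omega
  · have key : ∀ k, faultCount
        ((List.replicate k (List.replicate (t - 1) false ++ [true, true])).flatten
          ++ List.replicate (t - 1) false) = k := by
      intro k
      induction k with
      | zero => simpa [faultCount] using faultCount_rep (t - 1) []
      | succ n ih =>
        rw [List.replicate_succ, List.flatten_cons]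
        simp only [List.append_assoc]
        rw [faultCount_rep]
        show faultCount (true :: true :: _) = n + 1
        rw [faultCount]
        rw [show ([] : List Bool).append
          ((List.replicate n (List.replicate (t - 1) false ++ [true, true])).flatten
            ++ List.replicate (t - 1) false) =
          (List.replicate n (List.replicate (t - 1) false ++ [true, true])).flatten
            ++ List.replicate (t - 1) false from rfl]
        omega
    exact key t
end

section
/- Let t ≥ 1 be an integer. If δ is a binary string such that no prefix of δ satisfies the two-tailed stop condition with parameter t, then the length of δ is at most ⌊(t+3)²/4⌋ − 2; explicitly, at most (t+3)²/4 − 2 when t is odd and at most (t+2)(t+4)/4 − 2 when t is even. Hence the two-tailed adaptive time decoder, whose difference vector after l rounds of syndrome measurement has length l−1, is guaranteed to stop within (t+3)²/4 − 1 rounds when t is odd and within (t+2)(t+4)/4 − 1 rounds when t is even. -/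
/-- The two-tailed stop condition with parameter `t`: some maximal zero-run `0^γ`
of `δ` (with `γ ≥ 1`), written `δ = a ++ 0^γ ++ b` where `a` is empty or ends in the
`1` immediately preceding the run and `b` is empty or starts with the `1` immediately
following it, satisfies `α + β + γ ≥ t`, where `α = f(a minus its final 1)` and
`β = f(b minus its initial 1)`; or else `N11(δ) ≥ t`. -/
def stopTwo (t : ℕ) (δ : List Bool) : Prop :=
  (∃ a b γ, 1 ≤ γ ∧ δ = a ++ List.replicate γ false ++ b ∧
      (a = [] ∨ a.getLast? = some true) ∧ (b = [] ∨ b.head? = some true) ∧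
      t ≤ faultCount a.dropLast + faultCount b.tail + γ)
  ∨ t ≤ countN11 δ

namespace TT

abbrev Run := ℕ × ℕ

/-- zeros-first encoding: `build g ((u,z)::rs) = 0^g 1^u (build z rs)`. -/
def build : ℕ → List Run → List Bool
  | g, [] => List.replicate g false
  | g, (u, z) :: rs => List.replicate g false ++ List.replicate u true ++ build z rs

def valid : List Run → Prop
  | [] => True
  | [(u, _)] => 1 ≤ u
  | (u, z) :: rs => 1 ≤ u ∧ 1 ≤ z ∧ valid rs

def validS (rs : List Run) : Prop := ∀ p ∈ rs, 1 ≤ p.1 ∧ 1 ≤ p.2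

def F : List Run → ℕ
  | [] => 0
  | (u, _) :: rs => (u+1)/2 + F rs

def D : List Run → ℕ
  | [] => 0
  | (u, _) :: rs => u/2 + D rs

def G : List Run → ℕ
  | [] => 0
  | (_, z) :: rs => z + G rs

def U : List Run → ℕ
  | [] => 0
  | (u, _) :: rs => u + U rs

def tc : List Run → ℕ
  | [] => 0
  | (u, _) :: rs => u/2 + F rs

lemma fc_zeros (g : ℕ) (w : List Bool) :
    faultCount (List.replicate g false ++ w) = faultCount w := by
  induction g with
  | zero => rfl
  | succ n ih => simpa [List.replicate_succ, faultCount] using ih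

lemma cn_zeros (g : ℕ) (w : List Bool) :
    countN11 (List.replicate g false ++ w) = countN11 w := by
  induction g with
  | zero => rfl
  | succ n ih => simpa [List.replicate_succ, countN11] using ih

lemma fc_ones : ∀ (u : ℕ) (w : List Bool), w.head? ≠ some true →
    faultCount (List.replicate u true ++ w) = (u+1)/2 + faultCount w
  | 0, w, _ => by simp
  | 1, w, hw => by
      cases w with
      | nil => rfl
      | cons b w' =>
        cases b
        · simp [List.replicate_succ, faultCount]
        · simp at hw
  | (n+2), w, hw => by
      have := fc_ones n w hw
      simp only [List.replicate_succ, List.cons_append] at this ⊢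
      rw [show faultCount (true :: true :: (List.replicate n true ++ w)) =
        1 + faultCount (List.replicate n true ++ w) from rfl, this]
      omega

lemma cn_ones : ∀ (u : ℕ) (w : List Bool), w.head? ≠ some true →
    countN11 (List.replicate u true ++ w) = u/2 + countN11 w
  | 0, w, _ => by simp
  | 1, w, hw => by
      cases w with
      | nil => rfl
      | cons b w' =>
        cases b
        · simp [List.replicate_succ, countN11]
        · simp at hw
  | (n+2), w, hw => by
      have := cn_ones n w hw
      simp only [List.replicate_succ, List.cons_append] at this ⊢
      rw [show countN11 (true :: true :: (List.replicate n true ++ w)) =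
        1 + countN11 (List.replicate n true ++ w) from rfl, this]
      omega

lemma build_eq (g : ℕ) (rs : List Run) :
    build g rs = List.replicate g false ++ build 0 rs := by
  cases rs with
  | nil => simp [build]
  | cons p rs => cases p; simp [build]

lemma build_append (g : ℕ) (rs1 rs2 : List Run) :
    build g (rs1 ++ rs2) = build g rs1 ++ build 0 rs2 := by
  induction rs1 generalizing g with
  | nil => simpa [build] using build_eq g rs2
  | cons p rs ih => cases p; simp [build, ih]

lemma head_build_ne_true {z : ℕ} {rs : List Run} (h : 1 ≤ z ∨ rs = []) :
    (build z rs).head? ≠ some true := by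
  rcases h with h | h
  · rw [build_eq]
    obtain ⟨z', rfl⟩ : ∃ z', z = z' + 1 := ⟨z - 1, by omega⟩
    simp [List.replicate_succ]
  · subst h; simp only [build]
    cases z <;> simp [List.replicate_succ]

lemma valid_cons {p : Run} {rs : List Run} (h : valid (p :: rs)) : valid rs := by
  cases p with | mk u z =>
  cases rs with
  | nil => trivial
  | cons q rs' => exact h.2.2

lemma valid_cons_u {p : Run} {rs : List Run} (h : valid (p :: rs)) : 1 ≤ p.1 := by
  cases p with | mk u z =>
  cases rs with
  | nil => exact h
  | cons q rs' => exact h.1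

lemma valid_cons_z {p : Run} {rs : List Run} (h : valid (p :: rs)) (hne : rs ≠ []) :
    1 ≤ p.2 := by
  cases p with | mk u z =>
  cases rs with
  | nil => simp at hne
  | cons q rs' => exact h.2.1

lemma fc_build {rs : List Run} (h : valid rs) (g : ℕ) :
    faultCount (build g rs) = F rs := by
  induction rs generalizing g with
  | nil =>
      rw [show build g [] = List.replicate g false ++ ([] : List Bool) by simp [build], fc_zeros]
      rfl
  | cons p rs ih =>
    cases p with | mk u z =>
    have h2 : (build z rs).head? ≠ some true := by
      apply head_build_ne_true
      rcases eq_or_ne rs [] with h' | h'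
      · exact Or.inr h'
      · exact Or.inl (valid_cons_z h h')
    simp only [build, List.append_assoc]
    rw [fc_zeros, fc_ones _ _ h2, ih (valid_cons h)]
    rfl

lemma cn_build {rs : List Run} (h : valid rs) (g : ℕ) :
    countN11 (build g rs) = D rs := by
  induction rs generalizing g with
  | nil =>
      rw [show build g [] = List.replicate g false ++ ([] : List Bool) by simp [build], cn_zeros]
      rfl
  | cons p rs ih =>
    cases p with | mk u z =>
    have h2 : (build z rs).head? ≠ some true := by
      apply head_build_ne_true
      rcases eq_or_ne rs [] with h' | h'
      · exact Or.inr h'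
      · exact Or.inl (valid_cons_z h h')
    simp only [build, List.append_assoc]
    rw [cn_zeros, cn_ones _ _ h2, ih (valid_cons h)]
    rfl

lemma fc_build_append {rs : List Run} (h : validS rs) (g : ℕ) (w : List Bool) :
    faultCount (build g rs ++ w) = F rs + faultCount w := by
  induction rs generalizing g with
  | nil => simp [build, fc_zeros, F]
  | cons p rs ih =>
    cases p with | mk u z =>
    have hz : 1 ≤ z := (h (u, z) (by simp)).2
    obtain ⟨z', rfl⟩ : ∃ z', z = z' + 1 := ⟨z - 1, by omega⟩
    have h2 : (List.replicate (z'+1) false ++ (build 0 rs ++ w)).head? ≠ some true := by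
      simp [List.replicate_succ]
    simp only [build, List.append_assoc]
    rw [fc_zeros, build_eq (z'+1) rs, List.append_assoc, fc_ones _ _ h2, fc_zeros]
    have := ih (fun p hp => h p (by simp [hp])) 0
    rw [show build 0 rs = build 0 rs ++ [] from (List.append_nil _).symm] at this
    rw [List.append_assoc, List.nil_append] at this
    rw [this]
    show _ = (u+1)/2 + F rs + _
    omega

lemma length_build (g : ℕ) (rs : List Run) :
    (build g rs).length = g + U rs + G rs := by
  induction rs generalizing g with
  | nil => simp [build, U, G]
  | cons p rs ih => cases p with | mk u z =>
      simp [build, U, G, ih]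
      omega

lemma exists_decomp (δ : List Bool) : ∃ g rs, valid rs ∧ δ = build g rs := by
  induction δ with
  | nil => exact ⟨0, [], trivial, rfl⟩
  | cons b δ ih =>
    obtain ⟨g, rs, hv, rfl⟩ := ih
    cases b
    · refine ⟨g + 1, rs, hv, ?_⟩
      rw [build_eq (g+1) rs, build_eq g rs, List.replicate_succ]
      rfl
    · cases g with
      | zero =>
        cases rs with
        | nil => exact ⟨0, [(1, 0)], by simp [valid], rfl⟩
        | cons p rs' =>
          cases p with | mk u z =>
          refine ⟨0, (u + 1, z) :: rs', ?_, ?_⟩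
          · cases rs' with
            | nil => simp [valid]
            | cons q rs'' => exact ⟨by omega, hv.2.1, hv.2.2⟩
          · simp [build, List.replicate_succ]
      | succ g' =>
        refine ⟨0, (1, g' + 1) :: rs, ?_, ?_⟩
        · cases rs with
          | nil => simp [valid]
          | cons q rs'' => exact ⟨le_refl 1, by omega, hv⟩
        · simp [build, List.replicate_succ, build_eq (g' + 1) rs]


lemma valid_split : ∀ (rs1 : List Run) {p : Run} {rs2 : List Run},
    valid (rs1 ++ p :: rs2) → validS rs1 ∧ 1 ≤ p.1 ∧ valid (p :: rs2)
  | [], p, rs2, h => ⟨fun q hq => by simp at hq, valid_cons_u h, h⟩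
  | q :: rs1, p, rs2, h => by
    cases q with | mk u z =>
    have hne : rs1 ++ p :: rs2 ≠ [] := by simp
    have h3 : 1 ≤ u ∧ 1 ≤ z ∧ valid (rs1 ++ p :: rs2) := by
      cases he : rs1 ++ p :: rs2 with
      | nil => exact absurd he hne
      | cons r l =>
        rw [List.cons_append, he] at h
        exact ⟨h.1, h.2.1, he ▸ h.2.2⟩
    obtain ⟨hS, hp, hv2⟩ := valid_split rs1 h3.2.2
    refine ⟨?_, hp, hv2⟩
    intro q hq
    rcases List.mem_cons.1 hq with rfl | hq
    · exact ⟨h3.1, h3.2.1⟩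
    · exact hS q hq

lemma FDlen : ∀ {rs : List Run}, valid rs →
    rs.length ≤ F rs ∧ F rs ≤ D rs + rs.length ∧ D rs ≤ F rs
  | [], _ => by simp [F, D]
  | (u, z) :: rs, h => by
    have hu : 1 ≤ u := valid_cons_u h
    have ih := FDlen (valid_cons h)
    simp only [F, D, List.length_cons]
    omega

lemma b_facts : ∀ {rs : List Run}, valid rs →
    (build 0 rs = [] ∨ (build 0 rs).head? = some true) ∧
      faultCount (build 0 rs).tail = tc rs
  | [], _ => by simp [build, tc, faultCount]
  | (u, z) :: rs, h => by
    have hu : 1 ≤ u := valid_cons_u h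
    obtain ⟨m, rfl⟩ : ∃ m, u = m + 1 := ⟨u - 1, by omega⟩
    have hb : build 0 ((m + 1, z) :: rs) =
        true :: (List.replicate m true ++ build z rs) := by
      simp [build, List.replicate_succ]
    have hh : (build z rs).head? ≠ some true := by
      apply head_build_ne_true
      rcases eq_or_ne rs [] with h' | h'
      · exact Or.inr h'
      · exact Or.inl (valid_cons_z h h')
    constructor
    · right; rw [hb]; rfl
    · rw [hb]
      show faultCount (List.replicate m true ++ build z rs) = _
      rw [fc_ones _ _ hh, fc_build (valid_cons h)]
      show _ = (m + 1) / 2 + F rs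
      rfl

lemma claimA (t : ℕ) : ∀ (rs : List Run) (Φ e γ0 : ℕ),
    e ≤ 1 →
    (1 ≤ γ0 → γ0 + Φ + tc rs < t + e) →
    (∀ rs1 u γ rs2, rs = rs1 ++ (u, γ) :: rs2 → 1 ≤ γ →
      Φ + F rs1 + u / 2 + tc rs2 + γ < t) →
    Φ + F rs < t →
    γ0 + G rs + (rs.length + 1) * (Φ + F rs) + 2 * D rs + (rs.length + 1)
      ≤ (rs.length + 1) * t + e + 2 * F rs
  | [], Φ, e, γ0, he, hhead, _, hF => by
    simp only [F, D, G, tc, List.length_nil] at *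
    rcases Nat.eq_zero_or_pos γ0 with h0 | h0
    · omega
    · have := hhead h0; omega
  | (u, z) :: rs, Φ, e, γ0, he, hhead, hsplit, hF => by
    have hhead' : 1 ≤ z → z + (Φ + (u + 1) / 2) + tc rs < t + ((u + 1) / 2 - u / 2) := by
      intro hz
      have := hsplit [] u z rs rfl hz
      simp only [F] at this
      omega
    have hsplit' : ∀ rs1 u' γ rs2', rs = rs1 ++ (u', γ) :: rs2' → 1 ≤ γ →
        (Φ + (u + 1) / 2) + F rs1 + u' / 2 + tc rs2' + γ < t := by
      intro rs1 u' γ rs2' heq hγ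
      have := hsplit ((u, z) :: rs1) u' γ rs2' (by rw [heq]; rfl) hγ
      simp only [F] at this
      omega
    have hF' : (Φ + (u + 1) / 2) + F rs < t := by
      simp only [F] at hF; omega
    have IH := claimA t rs (Φ + (u + 1) / 2) ((u + 1) / 2 - u / 2) z (by omega)
      hhead' hsplit' hF'
    simp only [F, D, G, tc, List.length_cons] at *
    have e1 : (rs.length + 1 + 1) * (Φ + ((u + 1) / 2 + F rs))
        = (rs.length + 1) * (Φ + (u + 1) / 2 + F rs) + (Φ + (u + 1) / 2 + F rs) := by
      ring
    have e2 : (rs.length + 1 + 1) * t = (rs.length + 1) * t + t := by ring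
    rw [e1, e2]
    generalize (rs.length + 1) * (Φ + (u + 1) / 2 + F rs) = A at *
    generalize (rs.length + 1) * t = B at *
    rcases Nat.eq_zero_or_pos γ0 with h0 | h0
    · omega
    · have := hhead h0; omega

lemma claimB (t : ℕ) : ∀ (rs : List Run) (Φ e γ0 : ℕ),
    e ≤ 1 →
    (1 ≤ γ0 → γ0 + Φ + tc rs < t + e) →
    (∀ rs1 u γ rs2, rs = rs1 ++ (u, γ) :: rs2 → 1 ≤ γ →
      Φ + F rs1 + u / 2 + tc rs2 + γ < t) →
    t ≤ Φ + F rs →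
    γ0 + G rs + 1 ≤ max (e + rs.length) 1
  | [], Φ, e, γ0, he, hhead, _, hF => by
    simp only [F, G, tc, List.length_nil] at *
    rcases Nat.eq_zero_or_pos γ0 with h0 | h0
    · omega
    · have := hhead h0; omega
  | (u, z) :: rs, Φ, e, γ0, he, hhead, hsplit, hF => by
    have hhead' : 1 ≤ z → z + (Φ + (u + 1) / 2) + tc rs < t + ((u + 1) / 2 - u / 2) := by
      intro hz
      have := hsplit [] u z rs rfl hz
      simp only [F] at this
      omega
    have hsplit' : ∀ rs1 u' γ rs2', rs = rs1 ++ (u', γ) :: rs2' → 1 ≤ γ →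
        (Φ + (u + 1) / 2) + F rs1 + u' / 2 + tc rs2' + γ < t := by
      intro rs1 u' γ rs2' heq hγ
      have := hsplit ((u, z) :: rs1) u' γ rs2' (by rw [heq]; rfl) hγ
      simp only [F] at this
      omega
    have hF' : t ≤ (Φ + (u + 1) / 2) + F rs := by
      simp only [F] at hF; omega
    have IH := claimB t rs (Φ + (u + 1) / 2) ((u + 1) / 2 - u / 2) z (by omega)
      hhead' hsplit' hF'
    simp only [F, G, tc, List.length_cons] at *
    rcases Nat.eq_zero_or_pos γ0 with h0 | h0
    · omega
    · have := hhead h0; omega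

lemma F_le_t (t : ℕ) : ∀ {rs : List Run}, valid rs →
    (∀ rs1 u γ rs2, rs = rs1 ++ (u, γ) :: rs2 → 1 ≤ γ →
      F rs1 + u / 2 + tc rs2 + γ < t) →
    D rs < t → F rs ≤ t
  | [], _, _, hD => by simp [F]
  | [(u, z)], _, _, hD => by
    simp only [F, D] at *
    omega
  | (u, z) :: (u2, z2) :: rs, hv, hsplit, hD => by
    have hz : 1 ≤ z := valid_cons_z hv (by simp)
    have := hsplit [] u z ((u2, z2) :: rs) rfl hz
    simp only [F, D, tc] at *
    omega

lemma arith (t k Fv Dv γ0 Gv : ℕ) (ht : 1 ≤ t) (hk : k ≤ Fv) (hFD : Fv ≤ Dv + k)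
    (hDF : Dv ≤ Fv) (hF : Fv < t)
    (hA : γ0 + Gv + (k + 1) * (0 + Fv) + 2 * Dv + (k + 1) ≤ (k + 1) * t + 0 + 2 * Fv) :
    4 * (γ0 + Fv + Dv + Gv) ≤ t * t + 6 * t + 1 := by
  zify at *
  have h1 : (γ0 : ℤ) + Gv ≤ (k + 1) * (t - 1 - Fv) + 2 * (Fv - Dv) := by
    have hr : ((k : ℤ) + 1) * (t - 1 - Fv) = (k + 1) * t - (k + 1) * Fv - (k + 1) := by
      ring
    have hr2 : ((k : ℤ) + 1) * (0 + Fv) = (k + 1) * Fv := by ring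
    rw [hr2] at hA
    linarith
  nlinarith [mul_nonneg (by linarith : (0 : ℤ) ≤ (Fv : ℤ) - k)
      (by linarith : (0 : ℤ) ≤ (t : ℤ) - 1 - Fv),
    sq_nonneg ((t : ℤ) - 2 * Fv + 1), h1, hk, hFD, hDF, hF]

lemma U_eq : ∀ rs : List Run, U rs = F rs + D rs
  | [] => rfl
  | (u, z) :: rs => by
    have := U_eq rs
    simp only [U, F, D]
    omega

lemma hsplit_of (t g : ℕ) {rs : List Run} (hv : valid rs)
    (hEx : ∀ a b γ, 1 ≤ γ → build g rs = a ++ List.replicate γ false ++ b →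
      (a = [] ∨ a.getLast? = some true) → (b = [] ∨ b.head? = some true) →
      faultCount a.dropLast + faultCount b.tail + γ < t) :
    ∀ rs1 u γ rs2, rs = rs1 ++ (u, γ) :: rs2 → 1 ≤ γ →
      F rs1 + u / 2 + tc rs2 + γ < t := by
  intro rs1 u γ rs2 heq hγ
  subst heq
  obtain ⟨hS, hu, hv2⟩ := valid_split rs1 hv
  obtain ⟨m, rfl⟩ : ∃ m, u = m + 1 := ⟨u - 1, by omega⟩
  have hbf := b_facts (valid_cons hv2)
  have hδ : build g (rs1 ++ (m + 1, γ) :: rs2)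
      = ((build g rs1 ++ List.replicate m true) ++ [true]) ++ List.replicate γ false
          ++ build 0 rs2 := by
    rw [build_append]
    simp [build, List.replicate_succ', build_eq γ rs2, List.append_assoc]
  have h2 := hEx ((build g rs1 ++ List.replicate m true) ++ [true]) (build 0 rs2) γ hγ hδ
    (Or.inr (by simp)) hbf.1
  rw [List.dropLast_concat, fc_build_append hS, hbf.2] at h2
  rw [show faultCount (List.replicate m true) = (m + 1) / 2 by
    simpa [show faultCount [] = 0 from rfl] using fc_ones m [] (by simp)] at h2
  omega

end TT


theorem two_tailed_length_bound' (t : ℕ) (ht : 1 ≤ t) (δ : List Bool)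
    (h : ∀ p, p <+: δ → ¬ ((∃ a b γ, 1 ≤ γ ∧ p = a ++ List.replicate γ false ++ b ∧
      (a = [] ∨ a.getLast? = some true) ∧ (b = [] ∨ b.head? = some true) ∧
      t ≤ faultCount a.dropLast + faultCount b.tail + γ)
      ∨ t ≤ countN11 p)) :
    δ.length ≤ (t + 3) ^ 2 / 4 - 2 := by
  obtain ⟨g, rs, hv, rfl⟩ := TT.exists_decomp δ
  have hns := h _ (List.prefix_refl _)
  have hEx : ∀ a b γ, 1 ≤ γ → TT.build g rs = a ++ List.replicate γ false ++ b →
      (a = [] ∨ a.getLast? = some true) → (b = [] ∨ b.head? = some true) →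
      faultCount a.dropLast + faultCount b.tail + γ < t :=
    fun a b γ h1 h2 h3 h4 => not_le.1 fun h5 => hns (Or.inl ⟨a, b, γ, h1, h2, h3, h4, h5⟩)
  have hN : TT.D rs < t := by
    have h' : ¬ t ≤ countN11 (TT.build g rs) := fun hb => hns (Or.inr hb)
    rwa [TT.cn_build hv, not_le] at h'
  have hsplit := TT.hsplit_of t g hv hEx
  have hhead : 1 ≤ g → g + 0 + TT.tc rs < t + 0 := by
    intro hg
    have hbf := TT.b_facts hv
    have h2 := hEx [] (TT.build 0 rs) g hg (by rw [TT.build_eq]; rfl) (Or.inl rfl) hbf.1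
    simp only [List.dropLast_nil, hbf.2] at h2
    have h0 : faultCount [] = 0 := rfl
    omega
  have hlen : (TT.build g rs).length = g + TT.U rs + TT.G rs := TT.length_build g rs
  have hUeq := TT.U_eq rs
  have hFDl := TT.FDlen hv
  have hkey : 4 * (TT.build g rs).length ≤ t * t + 6 * t + 1 := by
    rcases lt_or_ge (TT.F rs) t with hFt | hFt
    · have hA := TT.claimA t rs 0 0 g (by omega) hhead
        (fun rs1 u γ rs2 heq hγ => by have := hsplit rs1 u γ rs2 heq hγ; omega)
        (by omega)
      have harith := TT.arith t rs.length (TT.F rs) (TT.D rs) g (TT.G rs) ht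
        hFDl.1 hFDl.2.1 hFDl.2.2 hFt hA
      have hx : (TT.build g rs).length = g + TT.F rs + TT.D rs + TT.G rs := by omega
      rw [show 4 * (TT.build g rs).length
        = 4 * (g + TT.F rs + TT.D rs + TT.G rs) by omega]
      exact harith
    · have hB := TT.claimB t rs 0 0 g (by omega) hhead
        (fun rs1 u γ rs2 heq hγ => by have := hsplit rs1 u γ rs2 heq hγ; omega)
        (by omega)
      have hFle := TT.F_le_t t hv hsplit hN
      have hne : 1 ≤ rs.length := by
        cases rs with
        | nil => simp only [TT.F] at hFt; omega
        | cons p l => simp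
      have hL2 : (TT.build g rs).length + 2 ≤ 3 * t := by omega
      rcases le_or_gt t 5 with h5 | h5
      · interval_cases t <;> omega
      · have h6 : 6 * t ≤ t * t := Nat.mul_le_mul_right t (by omega)
        obtain ⟨S, hSe⟩ : ∃ S, t * t = S := ⟨_, rfl⟩
        rw [hSe] at h6 ⊢
        omega
  have hsq : (t + 3) ^ 2 = t * t + 6 * t + 9 := by ring
  rw [hsq]
  obtain ⟨S, hSe⟩ : ∃ S, t * t = S := ⟨_, rfl⟩
  rw [hSe] at hkey ⊢
  omega


/-- If no prefix of the binary string `δ` satisfies the two-tailed stop condition with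
parameter `t ≥ 1`, then `δ` has length at most `⌊(t+3)²/4⌋ − 2`, i.e. at most
`(t+3)²/4 − 2` for odd `t` and `(t+2)(t+4)/4 − 2` for even `t`. -/
theorem two_tailed_length_bound (t : ℕ) (ht : 1 ≤ t) (δ : List Bool)
    (h : ∀ p, p <+: δ → ¬ stopTwo t p) :
    δ.length ≤ (t + 3) ^ 2 / 4 - 2 :=
  two_tailed_length_bound' t ht δ fun p hp hcon => h p hp hcon
end

section
/- Let n, k, T, T_XZ be natural numbers with n > 0, k ≤ n, and T_XZ ≥ 1, and let R = k/n ∈ ℚ. Then, in ℚ, n(T + 1) / ((1 + 2T + T_XZ)(4n − 2k)) ≤ 1/(8 − 4R). That is, the ratio M_CSS,CRO,SO / M_stab of the memory footprint of the compact self-orthogonal-CSS lookup table to that of the generic stabilizer-code lookup table is at most 1/(8 − 4R), so for codes of vanishing rate R the compact table requires at most 12.5% of the generic table's memory. -/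
/-- For a self-orthogonal `[[n,k,d]]` CSS code with encoding rate `R = k/n`, `T`
distinct nontrivial pure syndromes and `T_XZ ≥ 1` mixed syndromes, the ratio of the
compact lookup-table memory `M_CSS,CRO,SO = n(T + 1)` to the generic stabilizer-code
lookup-table memory `M_stab = (1 + 2T + T_XZ)(4n − 2k)` is at most `1/(8 − 4R)`;
at vanishing rate this is at most 12.5%. -/
theorem compact_lookup_table_ratio_bound (n k T TXZ : ℕ)
    (hn : 0 < n) (hk : k ≤ n) (hT : 1 ≤ TXZ) :
    ((n : ℚ) * (T + 1)) / ((1 + 2 * T + TXZ) * (4 * n - 2 * k))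
      ≤ 1 / (8 - 4 * ((k : ℚ) / n)) := by
  have hn' : (0:ℚ) < n := by exact_mod_cast hn
  have hk' : (k:ℚ) ≤ n := by exact_mod_cast hk
  have hT' : (1:ℚ) ≤ TXZ := by exact_mod_cast hT
  have hT0 : (0:ℚ) ≤ T := Nat.cast_nonneg T
  have hk0 : (0:ℚ) ≤ k := Nat.cast_nonneg k
  have h8 : (8:ℚ) - 4*((k:ℚ)/n) = (8*n-4*k)/n := by field_simp
  rw [h8, one_div_div]
  have hd1 : (0:ℚ) < (1 + 2 * T + TXZ) * (4 * n - 2 * k) := by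
    apply mul_pos <;> linarith
  have hd2 : (0:ℚ) < 8*n-4*k := by linarith
  rw [div_le_div_iff₀ hd1 hd2]
  nlinarith [mul_nonneg (mul_nonneg hn'.le (by linarith : (0:ℚ) ≤ 4*n-2*k)) (by linarith : (0:ℚ) ≤ (TXZ:ℚ)-1)]
end
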